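/- Transmission probability of the online scheduling algorithm: when u is drawn uniformly from [0,1), for every slot t ∈ {1,…,T} the probability that Alg. 2 decides d(t) = k*_t equals min{x_{k*_t}(t), 1}, where x_{k*_t}(t) is the value computed by the Alg. 1 recursion. -/
import Mathlib


open scoped Classical
open MeasureTheory

noncomputable section

/-- Age of information of user `i` under schedule `d`:
`a_i(0) = 0`, and `a_i(t) = 0` if `1_{i,d(t)}(t) = 1`, `a_i(t) = a_i(t-1) + 1` otherwise. -/
def age (ind : ℕ → ℕ → ℕ → ℝ) (d : ℕ → ℕ) (i : ℕ) : ℕ → ℕ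
  | 0 => 0
  | t + 1 => if ind i (d (t + 1)) (t + 1) = 1 then 0 else age ind d i t + 1

/-- Inner loop of Alg. 1 at a fixed slot: `innerLoop Ck θ ps j` is the value of the current
slot's `x`-variable after processing iterations `1, …, j`, where `ps j` is the (final)
contribution `Σ_{τ=j}^{t-1} x_{k*_τ}(τ)` of the earlier slots.  At iteration `j` the current
value of `Σ_{τ=j}^{t} x_{k*_τ}(τ)` is `ps j + innerLoop Ck θ ps (j-1)`; if it is `< 1`, the
`x`-variable is increased by `(1/Ck) Σ_{τ=j}^{t} x_{k*_τ}(τ) + 1/(θ·Ck)`. -/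
def innerLoop (Ck θ : ℝ) (ps : ℕ → ℝ) : ℕ → ℝ
  | 0 => 0
  | j + 1 =>
      if ps (j + 1) + innerLoop Ck θ ps j < 1 then
        innerLoop Ck θ ps j + (ps (j + 1) + innerLoop Ck θ ps j) / Ck + 1 / (θ * Ck)
      else innerLoop Ck θ ps j

/-- `xvec Ck θ t τ` : the value of `x_{k*_τ}(τ)` after Alg. 1 has processed slots `1, …, t`
(`Ck τ` stands for the cost `C_{k*_τ}` used in slot `τ`). -/
def xvec (Ck : ℕ → ℝ) (θ : ℝ) : ℕ → ℕ → ℝ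
  | 0, _ => 0
  | t + 1, τ =>
      if τ = t + 1 then
        innerLoop (Ck (t + 1)) θ (fun j => ∑ σ ∈ Finset.Ico j (t + 1), xvec Ck θ t σ) (t + 1)
      else xvec Ck θ t τ

/-- Final value of `x_{k*_t}(t)` computed by Alg. 1. -/
def xval (Ck : ℕ → ℝ) (θ : ℝ) (t : ℕ) : ℝ := xvec Ck θ t t

/-- `psFun Ck θ t j = Σ_{σ=j}^{t-1} x_{k*_σ}(σ)` (final values of the slots before `t`). -/
def psFun (Ck : ℕ → ℝ) (θ : ℝ) (t : ℕ) (j : ℕ) : ℝ :=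
  ∑ σ ∈ Finset.Ico j t, xvec Ck θ (t - 1) σ

/-- The update condition of Alg. 1 at iteration `j` of slot `t`: the current value of
`Σ_{τ=j}^{t} x_{k*_τ}(τ)` (earlier slots final, slot `t` after iterations `1,…,j-1`) is `< 1`. -/
def algCond (Ck : ℕ → ℝ) (θ : ℝ) (t j : ℕ) : Prop :=
  psFun Ck θ t j + innerLoop (Ck t) θ (psFun Ck θ t) (j - 1) < 1

/-- Final value of `z_{i,j}(t)` computed by Alg. 1 (it is the same for every user `i`). -/
def zval (Ck : ℕ → ℝ) (θ : ℝ) (j t : ℕ) : ℝ :=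
  if algCond Ck θ t j then
    1 - (psFun Ck θ t j + innerLoop (Ck t) θ (psFun Ck θ t) (j - 1))
  else 0

/-- Final value of `y_{i,j}(t)` computed by Alg. 1 (it is the same for every user `i`). -/
def yval (Ck : ℕ → ℝ) (θ : ℝ) (N : ℕ) (j t : ℕ) : ℝ :=
  if algCond Ck θ t j then 1 / N else 0

/-- `k*_t`: the minimum power level `k ≥ 1` with `1_{i,k}(t) = 1` for every user `i`. -/
def kstar (ind : ℕ → ℕ → ℕ → ℝ) (N : ℕ) (t : ℕ) : ℕ :=
  sInf {k : ℕ | 1 ≤ k ∧ ∀ i ∈ Finset.Icc 1 N, ind i k t = 1}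

/-- `X(t) = Σ_{τ=1}^t min{x_{k*_τ}(τ), 1}`, used by Alg. 2 (so `X(0) = 0`). -/
def bigX (Ck : ℕ → ℝ) (θ : ℝ) (t : ℕ) : ℝ :=
  ∑ τ ∈ Finset.Icc 1 t, min (xval Ck θ τ) 1

/-- Alg. 2 transmits in slot `t` for randomness `u` iff `u + k ∈ [X(t-1), X(t))` for some
integer `k ≥ 0`. -/
def transmits (Ck : ℕ → ℝ) (θ : ℝ) (u : ℝ) (t : ℕ) : Prop :=
  ∃ k : ℕ, bigX Ck θ (t - 1) ≤ u + k ∧ u + k < bigX Ck θ t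

/-- The decision of Alg. 2 in slot `t` for randomness `u`: transmit with power `k*_t`, or idle. -/
def dAlg (ind : ℕ → ℕ → ℕ → ℝ) (N : ℕ) (Ck : ℕ → ℝ) (θ : ℝ) (u : ℝ) (t : ℕ) : ℕ :=
  if transmits Ck θ u t then kstar ind N t else 0

/-- The constant `θ = (1 + 1/C_M)^⌊C_1⌋ − 1` of Alg. 1. -/
def thetaOf (C : ℕ → ℝ) (M : ℕ) : ℝ := (1 + 1 / C M) ^ ⌊C 1⌋ - 1

lemma innerLoop_nonneg {Ck θ : ℝ} (hCk : 0 < Ck) (hθ : 0 < θ) {ps : ℕ → ℝ}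
    (hps : ∀ j, 0 ≤ ps j) : ∀ j, 0 ≤ innerLoop Ck θ ps j := by
  intro j
  induction j with
  | zero => simp [innerLoop]
  | succ j ih =>
    simp only [innerLoop]
    split
    · have h1 : 0 ≤ (ps (j + 1) + innerLoop Ck θ ps j) / Ck :=
        div_nonneg (by linarith [hps (j + 1)]) hCk.le
      have h2 : 0 < 1 / (θ * Ck) := by positivity
      linarith
    · exact ih

lemma xvec_nonneg {Ck : ℕ → ℝ} {θ : ℝ} (hCk : ∀ τ, 0 < Ck τ) (hθ : 0 < θ) :
    ∀ t τ, 0 ≤ xvec Ck θ t τ := by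
  intro t
  induction t with
  | zero => intro τ; simp [xvec]
  | succ t ih =>
    intro τ
    simp only [xvec]
    split
    · exact innerLoop_nonneg (hCk _) hθ
        (fun j => Finset.sum_nonneg fun σ _ => ih σ) _
    · exact ih τ

/-- The main measure computation: the wrap-around of `[a, a+δ)` into `[0,1)` has measure `δ`. -/
lemma wrap_measure (a δ : ℝ) (ha : 0 ≤ a) (hδ0 : 0 ≤ δ) (hδ1 : δ ≤ 1) :
    (volume {u : ℝ | u ∈ Set.Ico (0 : ℝ) 1 ∧
        ∃ k : ℕ, a ≤ u + k ∧ u + k < a + δ}).toReal = δ := by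
  set n : ℕ := ⌊a⌋.toNat with hndef
  have hfloor : ((n : ℤ) : ℝ) = (⌊a⌋ : ℝ) := by
    rw [hndef, Int.toNat_of_nonneg (Int.floor_nonneg.mpr ha)]
  have hna : (n : ℝ) ≤ a := by
    have := Int.floor_le a
    push_cast at hfloor ⊢
    linarith
  have hna1 : a < (n : ℝ) + 1 := by
    have := Int.lt_floor_add_one a
    push_cast at hfloor ⊢
    linarith
  set f : ℝ := a - n with hfdef
  have hf0 : 0 ≤ f := by rw [hfdef]; linarith
  have hf1 : f < 1 := by rw [hfdef]; linarith
  have hset : {u : ℝ | u ∈ Set.Ico (0 : ℝ) 1 ∧ ∃ k : ℕ, a ≤ u + k ∧ u + k < a + δ}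
      = Set.Ico 0 (min f (a + δ - (n + 1))) ∪ Set.Ico f (min 1 (a + δ - n)) := by
    ext u
    simp only [Set.mem_setOf_eq, Set.mem_Ico, Set.mem_union, lt_min_iff]
    constructor
    · rintro ⟨⟨hu0, hu1⟩, k, hk1, hk2⟩
      have hkn : n ≤ k := by
        by_contra hc
        push_neg at hc
        have : (k : ℝ) + 1 ≤ n := by exact_mod_cast hc
        linarith
      rcases lt_or_ge u f with huf | huf
      · left
        have hkn1 : n + 1 ≤ k := by
          by_contra hc
          push_neg at hc
          have hkeq : k = n := le_antisymm (by omega) hkn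
          rw [hkeq] at hk1
          have : (n : ℝ) ≤ u + n := by linarith [hk1]
          linarith [hk1]
        have : ((n : ℝ) + 1) ≤ k := by exact_mod_cast hkn1
        refine ⟨hu0, huf, ?_⟩
        linarith
      · right
        have : (n : ℝ) ≤ k := by exact_mod_cast hkn
        exact ⟨huf, hu1, by linarith⟩
    · rintro (⟨hu0, huf, hub⟩ | ⟨huf, hu1, hub⟩)
      · refine ⟨⟨hu0, by linarith⟩, n + 1, ?_, ?_⟩ <;> push_cast <;> linarith
      · exact ⟨⟨by linarith, hu1⟩, n, by push_cast; constructor <;> linarith⟩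
  rw [hset]
  have hdisj : Disjoint (Set.Ico (0:ℝ) (min f (a + δ - (n + 1))))
      (Set.Ico f (min 1 (a + δ - n))) := by
    rw [Set.disjoint_left]
    rintro u ⟨_, hu⟩ ⟨hu', _⟩
    exact absurd (lt_of_lt_of_le hu (min_le_left _ _)) (not_lt.mpr hu')
  rw [measure_union hdisj measurableSet_Ico, Real.volume_Ico, Real.volume_Ico,
    ENNReal.toReal_add ENNReal.ofReal_ne_top ENNReal.ofReal_ne_top,
    ENNReal.toReal_ofReal', ENNReal.toReal_ofReal']
  have hfa : f = a - n := hfdef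
  have hmin1 : min f (a + δ - (n + 1)) = a + δ - (n + 1) :=
    min_eq_right (by linarith)
  rw [hmin1]
  rcases le_or_gt (f + δ) 1 with hcase | hcase
  · have h2 : min 1 (a + δ - n) = a + δ - n := min_eq_right (by linarith)
    rw [h2, max_eq_right (show a + δ - (n + 1) - 0 ≤ 0 by linarith),
      max_eq_left (show (0 : ℝ) ≤ a + δ - n - f by linarith)]
    linarith
  · have h2 : min 1 (a + δ - n) = 1 := min_eq_left (by linarith)
    rw [h2, max_eq_left (show (0 : ℝ) ≤ a + δ - (n + 1) - 0 by linarith),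
      max_eq_left (show (0 : ℝ) ≤ 1 - f by linarith)]
    linarith

/-- transmission probability of Alg. 2: when `u` is drawn uniformly from
`[0,1)`, for every slot `t ∈ {1,…,T}` the probability that Alg. 2 decides `d(t) = k*_t`
equals `min{x_{k*_t}(t), 1}`. -/
theorem stmt10 (N M T : ℕ) (hN : 1 ≤ N) (hM : 1 ≤ M) (hT : 1 ≤ T)
    (ind : ℕ → ℕ → ℕ → ℝ)
    (hind01 : ∀ i k t, ind i k t = 0 ∨ ind i k t = 1)
    (hmono : ∀ i k k' t, k ≤ k' → ind i k t = 1 → ind i k' t = 1)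
    (hcov : ∀ i t, ind i M t = 1)
    (C : ℕ → ℝ) (hC1 : 1 ≤ C 1)
    (hCmono : ∀ k k', 1 ≤ k → k ≤ k' → k' ≤ M → C k ≤ C k') :
    ∀ t ∈ Finset.Icc 1 T,
      (volume {u : ℝ | u ∈ Set.Ico (0 : ℝ) 1 ∧
          transmits (fun τ => C (kstar ind N τ)) (thetaOf C M) u t}).toReal
        = min (xval (fun τ => C (kstar ind N τ)) (thetaOf C M) t) 1 := by
  intro t ht
  simp only [Finset.mem_Icc] at ht
  set Ck : ℕ → ℝ := fun τ => C (kstar ind N τ) with hCkdef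
  set θ := thetaOf C M with hθdef
  have hCM : 1 ≤ C M := le_trans hC1 (hCmono 1 M le_rfl hM le_rfl)
  have hθpos : 0 < θ := by
    rw [hθdef, thetaOf]
    have h1 : (1 : ℝ) < 1 + 1 / C M := by
      have : (0 : ℝ) < 1 / C M := by positivity
      linarith
    have h2 : (0 : ℤ) < ⌊C 1⌋ := by
      have : (1 : ℤ) ≤ ⌊C 1⌋ := Int.le_floor.mpr (by exact_mod_cast hC1)
      omega
    linarith [one_lt_zpow₀ h1 h2]
  have hCkpos : ∀ τ, 0 < Ck τ := by
    intro τ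
    have hMS : M ∈ {k : ℕ | 1 ≤ k ∧ ∀ i ∈ Finset.Icc 1 N, ind i k τ = 1} :=
      ⟨hM, fun i _ => hcov i τ⟩
    have hmem : kstar ind N τ ∈ {k : ℕ | 1 ≤ k ∧ ∀ i ∈ Finset.Icc 1 N, ind i k τ = 1} :=
      Nat.sInf_mem ⟨M, hMS⟩
    have hle : kstar ind N τ ≤ M := Nat.sInf_le hMS
    calc (0 : ℝ) < 1 := one_pos
      _ ≤ C 1 := hC1
      _ ≤ C (kstar ind N τ) := hCmono 1 _ le_rfl hmem.1 hle
  have hx0 : ∀ τ, 0 ≤ xval Ck θ τ := fun τ => xvec_nonneg hCkpos hθpos τ τ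
  obtain ⟨s, rfl⟩ : ∃ s, t = s + 1 := ⟨t - 1, by omega⟩
  have hbigX : bigX Ck θ (s + 1) = bigX Ck θ s + min (xval Ck θ (s + 1)) 1 := by
    rw [bigX, bigX, Finset.sum_Icc_succ_top (Nat.succ_le_succ (Nat.zero_le s))]
  have hbX0 : 0 ≤ bigX Ck θ s :=
    Finset.sum_nonneg fun τ _ => le_min (hx0 τ) zero_le_one
  have hset : {u : ℝ | u ∈ Set.Ico (0 : ℝ) 1 ∧ transmits Ck θ u (s + 1)} =
      {u : ℝ | u ∈ Set.Ico (0 : ℝ) 1 ∧ ∃ k : ℕ, bigX Ck θ s ≤ u + k ∧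
        u + k < bigX Ck θ s + min (xval Ck θ (s + 1)) 1} := by
    ext u
    simp only [transmits, Set.mem_setOf_eq, Nat.add_sub_cancel, hbigX]
  rw [hset, wrap_measure _ _ hbX0 (le_min (hx0 _) zero_le_one) (min_le_right _ _)]


end
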